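/- Let K be symmetric positive semidefinite, γ > 0, F ∈ ℝ^{T×n} with full column rank, Y₀ ∈ ℝ^T, and Ψ := (K+γI)⁻¹. Then the minimizer over θ ∈ ℝⁿ of the cost ‖(Y₀ − Fθ) − KΨ(Y₀ − Fθ)‖² + γ(Ψ(Y₀−Fθ))ᵀKΨ(Y₀−Fθ) is θ* = (FᵀΨF)⁻¹FᵀΨY₀. -/

import Mathlib

open Matrix

lemma smul_one_posDef {T : ℕ} {γ : ℝ} (hγ : 0 < γ) :
    (γ • (1 : Matrix (Fin T) (Fin T) ℝ)).PosDef := by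
  rw [smul_one_eq_diagonal]
  exact Matrix.PosDef.diagonal fun _ => hγ

/-- Closed-form physics-informed kernel regression: with `Ψ = (K+γI)⁻¹`, the cost
`θ ↦ ‖(Y₀−Fθ) − KΨ(Y₀−Fθ)‖² + γ(Ψ(Y₀−Fθ))ᵀKΨ(Y₀−Fθ)` is minimized at
`θ* = (FᵀΨF)⁻¹FᵀΨY₀`. -/
theorem stmt_17 {T n : ℕ} (K : Matrix (Fin T) (Fin T) ℝ) (hK : K.PosSemidef)
    (γ : ℝ) (hγ : 0 < γ)
    (F : Matrix (Fin T) (Fin n) ℝ)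
    (hF : ∀ x : Fin n → ℝ, F.mulVec x = 0 → x = 0)
    (Y₀ : Fin T → ℝ)
    (Ψ : Matrix (Fin T) (Fin T) ℝ)
    (hΨ : Ψ = (K + γ • (1 : Matrix (Fin T) (Fin T) ℝ))⁻¹) :
    let cost : (Fin n → ℝ) → ℝ := fun θ =>
      ((Y₀ - F.mulVec θ) - K.mulVec (Ψ.mulVec (Y₀ - F.mulVec θ))) ⬝ᵥ
          ((Y₀ - F.mulVec θ) - K.mulVec (Ψ.mulVec (Y₀ - F.mulVec θ)))
        + γ * (Ψ.mulVec (Y₀ - F.mulVec θ) ⬝ᵥ K.mulVec (Ψ.mulVec (Y₀ - F.mulVec θ)))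
    let θstar : Fin n → ℝ := (Fᵀ * Ψ * F)⁻¹.mulVec ((Fᵀ * Ψ).mulVec Y₀)
    ∀ θ : Fin n → ℝ, cost θstar ≤ cost θ ∧ (cost θ = cost θstar → θ = θstar) := by
  intro cost θstar θ
  -- A = K + γI is positive definite
  set A : Matrix (Fin T) (Fin T) ℝ := K + γ • (1 : Matrix (Fin T) (Fin T) ℝ) with hA
  have hApd : A.PosDef := Matrix.PosDef.posSemidef_add hK (smul_one_posDef hγ)
  have hΨpd : Ψ.PosDef := hΨ ▸ hApd.inv
  have hΨsymm : Ψᵀ = Ψ := hΨpd.isHermitian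
  have hAinv : A * Ψ = 1 := by
    rw [hΨ, Matrix.mul_nonsing_inv _ hApd.det_pos.ne'.isUnit]
  -- key rewriting: e − KΨe = γ Ψe
  have key : ∀ e : Fin T → ℝ, e - K.mulVec (Ψ.mulVec e) = γ • Ψ.mulVec e := by
    intro e
    have hmat : K * Ψ + γ • Ψ = 1 := by
      rw [← hAinv, hA, Matrix.add_mul, Matrix.smul_mul, Matrix.one_mul]
    have h1 : K.mulVec (Ψ.mulVec e) + γ • Ψ.mulVec e = e := by
      rw [Matrix.mulVec_mulVec, ← Matrix.smul_mulVec, ← Matrix.add_mulVec, hmat,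
        Matrix.one_mulVec]
    calc e - K.mulVec (Ψ.mulVec e)
        = (K.mulVec (Ψ.mulVec e) + γ • Ψ.mulVec e) - K.mulVec (Ψ.mulVec e) := by rw [h1]
      _ = γ • Ψ.mulVec e := by abel
  -- cost e = γ * (Ψe ⬝ᵥ e)
  have costeq : ∀ ϑ : Fin n → ℝ, cost ϑ =
      γ * (Ψ.mulVec (Y₀ - F.mulVec ϑ) ⬝ᵥ (Y₀ - F.mulVec ϑ)) := by
    intro ϑ
    set e := Y₀ - F.mulVec ϑ with he
    show (e - K.mulVec (Ψ.mulVec e)) ⬝ᵥ (e - K.mulVec (Ψ.mulVec e))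
        + γ * (Ψ.mulVec e ⬝ᵥ K.mulVec (Ψ.mulVec e)) = γ * (Ψ.mulVec e ⬝ᵥ e)
    rw [key e]
    have h1 : K.mulVec (Ψ.mulVec e) = e - γ • Ψ.mulVec e := by
      rw [eq_sub_iff_add_eq']
      exact (sub_eq_iff_eq_add.mp (key e)).symm
    rw [h1]
    simp only [smul_dotProduct, dotProduct_smul, dotProduct_sub, smul_eq_mul]
    ring
  -- M = FᵀΨF is positive definite
  set M : Matrix (Fin n) (Fin n) ℝ := Fᵀ * Ψ * F with hM
  have hMpd : M.PosDef := by
    refine Matrix.PosDef.of_dotProduct_mulVec_pos ?_ ?_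
    · show Mᴴ = M
      have : Mᴴ = Mᵀ := rfl
      rw [this, hM, Matrix.transpose_mul, Matrix.transpose_mul, Matrix.transpose_transpose,
        hΨsymm, Matrix.mul_assoc]
    · intro x hx
      have hFx : F.mulVec x ≠ 0 := fun h => hx (hF x h)
      show 0 < star x ⬝ᵥ M *ᵥ x
      rw [star_trivial, hM, Matrix.mul_assoc, ← Matrix.mulVec_mulVec,
        Matrix.dotProduct_mulVec, Matrix.vecMul_transpose, ← Matrix.mulVec_mulVec]
      simpa using hΨpd.dotProduct_mulVec_pos hFx
  -- FᵀΨ e* = 0, i.e. Ψe* ⬝ᵥ Fd = 0 for all d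
  have hMθ : M.mulVec θstar = (Fᵀ * Ψ).mulVec Y₀ := by
    show M.mulVec (M⁻¹.mulVec _) = _
    rw [Matrix.mulVec_mulVec, Matrix.mul_nonsing_inv _ hMpd.det_pos.ne'.isUnit, Matrix.one_mulVec]
  set estar := Y₀ - F.mulVec θstar with hestar
  have horth : ∀ d : Fin n → ℝ, Ψ.mulVec estar ⬝ᵥ F.mulVec d = 0 := by
    intro d
    have h0 : (Fᵀ * Ψ).mulVec estar = 0 := by
      rw [hestar, Matrix.mulVec_sub, Matrix.mulVec_mulVec, ← hM, hMθ, sub_self]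
    have h1 : Ψ.mulVec estar ⬝ᵥ F.mulVec d = (Fᵀ.mulVec (Ψ.mulVec estar)) ⬝ᵥ d := by
      rw [Matrix.dotProduct_mulVec, Matrix.mulVec_transpose]
    rw [h1, Matrix.mulVec_mulVec, h0, zero_dotProduct]
  -- quadratic expansion
  have expand : cost θ = cost θstar + γ * (F.mulVec (θ - θstar) ⬝ᵥ Ψ.mulVec (F.mulVec (θ - θstar))) := by
    rw [costeq θ, costeq θstar, ← hestar]
    set d := θ - θstar with hd
    have he : Y₀ - F.mulVec θ = estar - F.mulVec d := by
      rw [hestar, hd, Matrix.mulVec_sub]; abel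
    rw [he]
    have hsym : ∀ u v : Fin T → ℝ, Ψ.mulVec u ⬝ᵥ v = u ⬝ᵥ Ψ.mulVec v := by
      intro u v
      rw [Matrix.dotProduct_mulVec]
      nth_rewrite 1 [← hΨsymm]
      rw [Matrix.mulVec_transpose]
    have h2 : Ψ.mulVec (F.mulVec d) ⬝ᵥ estar = 0 := by
      rw [hsym, dotProduct_comm]; exact horth d
    rw [Matrix.mulVec_sub]
    simp only [dotProduct_sub, sub_dotProduct]
    rw [horth d, h2, hsym (F.mulVec d) (F.mulVec d)]
    ring
  have hquad : 0 ≤ F.mulVec (θ - θstar) ⬝ᵥ Ψ.mulVec (F.mulVec (θ - θstar)) := by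
    have := hΨpd.posSemidef.dotProduct_mulVec_nonneg (F.mulVec (θ - θstar))
    simpa using this
  constructor
  · rw [expand]
    nlinarith
  · intro heq
    rw [expand] at heq
    have h0 : F.mulVec (θ - θstar) ⬝ᵥ Ψ.mulVec (F.mulVec (θ - θstar)) = 0 := by
      nlinarith
    by_contra hne
    have hd : θ - θstar ≠ 0 := fun h => hne (by rwa [sub_eq_zero] at h)
    have hFd : F.mulVec (θ - θstar) ≠ 0 := fun h => hd (hF _ h)
    have := hΨpd.dotProduct_mulVec_pos hFd
    rw [star_trivial] at this
    linarith
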